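/- For integers d ≥ 2 and N ≥ 1, the substitution x ↦ ((d−1)x+(d+1)y)/d, y ↦ (y−x)/d applied twice to a homogeneous degree-N polynomial P(x,y) that is invariant under x ↦ (x+(d²−1)y)/d, y ↦ (x−y)/d yields P(−x,y). Consequently, if S(x,y) = P(((d−1)x+(d+1)y)/d, (y−x)/d), then S(x,y) = S(−x,y). -/
import Mathlib


/-- For integers `d ≥ 2`, `N ≥ 1`, if `P(x,y)` is a homogeneous degree-`N`
polynomial (here: a real function homogeneous of degree `N`) invariant under the
substitution `x ↦ (x+(d²−1)y)/d, y ↦ (x−y)/d`, and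
`S(x,y) = P(((d−1)x+(d+1)y)/d, (y−x)/d)`, then `S(x,y) = S(−x,y)`. -/
theorem stmt_1 (d N : ℕ) (hd : 2 ≤ d) (hN : 1 ≤ N)
    (P : ℝ → ℝ → ℝ)
    (hhom : ∀ t x y : ℝ, P (t * x) (t * y) = t ^ N * P x y)
    (hinv : ∀ x y : ℝ, P x y = P ((x + ((d : ℝ) ^ 2 - 1) * y) / d) ((x - y) / d))
    (S : ℝ → ℝ → ℝ)
    (hS : ∀ x y : ℝ, S x y = P ((((d : ℝ) - 1) * x + ((d : ℝ) + 1) * y) / d) ((y - x) / d)) :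
    ∀ x y : ℝ, S x y = S (-x) y := by
  intro x y
  have hd0 : (d : ℝ) ≠ 0 := by positivity
  rw [hS, hS, hinv ((((d : ℝ) - 1) * x + ((d : ℝ) + 1) * y) / d) ((y - x) / d)]
  congr 1 <;> field_simp <;> ring
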